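/- arXiv:2603.01446 — 9 statements merged into one kernel-verified Lean document; each statement's English description precedes it below -/
import Mathlib

section
/- Let X be a normed linear space over ℝ. For all x, y in X, |‖x‖ - ‖y‖| ≤ ‖x + y‖ + ‖x - y‖ - (‖x‖ + ‖y‖). -/
section

variable {E : Type*} [SeminormedAddCommGroup E] [NormedSpace ℝ E]

theorem two_mul_norm_le_norm_add_add_norm_sub (x y : E) : 2 * ‖x‖ ≤ ‖x + y‖ + ‖x - y‖ :=
  calc 2 * ‖x‖ = ‖(x + y) + (x - y)‖ := by
        rw [add_add_sub_cancel, ← two_smul ℝ x, norm_smul, Real.norm_two]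
    _ ≤ ‖x + y‖ + ‖x - y‖ := norm_add_le _ _

theorem two_mul_max_norm_le_norm_add_add_norm_sub (x y : E) :
    2 * max ‖x‖ ‖y‖ ≤ ‖x + y‖ + ‖x - y‖ := by
  have hy := two_mul_norm_le_norm_add_add_norm_sub y x
  rw [add_comm y x, norm_sub_rev y x] at hy
  rw [mul_max_of_nonneg _ _ zero_le_two]
  exact max_le (two_mul_norm_le_norm_add_add_norm_sub x y) hy

end

theorem stmt_1 {X : Type*} [NormedAddCommGroup X] [NormedSpace ℝ X] :
    ∀ x y : X, |‖x‖ - ‖y‖| ≤ ‖x + y‖ + ‖x - y‖ - (‖x‖ + ‖y‖) := by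
  intro x y
  -- |a - b| = 2 max a b - (a + b)
  have hmax := two_mul_max_norm_le_norm_add_add_norm_sub x y
  have habs := max_sub_min_eq_abs' ‖x‖ ‖y‖
  have hsum := min_add_max ‖x‖ ‖y‖
  linarith
end

section
/- Let X be a normed linear space over ℝ. For all x, y in X, ‖x + y‖ + ‖x - y‖ - (‖x‖ + ‖y‖) ≤ min(‖x - y‖, ‖x + y‖). -/
theorem stmt_2_general {X : Type*} [NormedAddCommGroup X] :
    ∀ x y : X, ‖x + y‖ + ‖x - y‖ - (‖x‖ + ‖y‖) ≤ min ‖x - y‖ ‖x + y‖ := fun x y =>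
  le_min (by linarith [norm_add_le x y]) (by linarith [norm_sub_le x y])

theorem stmt_2 {X : Type*} [NormedAddCommGroup X] [NormedSpace ℝ X] :
    ∀ x y : X, ‖x + y‖ + ‖x - y‖ - (‖x‖ + ‖y‖) ≤ min ‖x - y‖ ‖x + y‖ :=
  stmt_2_general
end

section
/- Let X be a normed linear space over ℝ. For all x, y in X, |‖x‖ - ‖y‖| ≤ ‖x‖ + ‖y‖ - |‖x + y‖ - ‖x - y‖|. -/
/-! Both `‖x + y‖` and `‖x - y‖` lie within `2‖x‖` and within `2‖y‖` of each other, since their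
arguments differ by `2x` (up to sign) and by `2y`; so `|‖x + y‖ - ‖x - y‖| ≤ 2 min ‖x‖ ‖y‖`.
The claim follows from `|a - b| = a + b - 2 min a b`. -/

section

variable {E : Type*} [SeminormedAddCommGroup E]

theorem abs_norm_add_sub_norm_sub_le_two_mul_norm_right (x y : E) :
    |‖x + y‖ - ‖x - y‖| ≤ 2 * ‖y‖ := by
  calc |‖x + y‖ - ‖x - y‖| ≤ ‖(x + y) - (x - y)‖ := abs_norm_sub_norm_le _ _
    _ = ‖y + y‖ := by rw [add_sub_sub_cancel]
    _ ≤ 2 * ‖y‖ := by linarith [norm_add_le y y]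

theorem abs_norm_add_sub_norm_sub_le_two_mul_min (x y : E) :
    |‖x + y‖ - ‖x - y‖| ≤ 2 * min ‖x‖ ‖y‖ := by
  have hx : |‖x + y‖ - ‖x - y‖| ≤ 2 * ‖x‖ := by
    simpa only [add_comm x y, norm_sub_rev y x] using
      abs_norm_add_sub_norm_sub_le_two_mul_norm_right y x
  rw [mul_min_of_nonneg _ _ zero_le_two]
  exact le_min hx (abs_norm_add_sub_norm_sub_le_two_mul_norm_right x y)

end

theorem stmt_3_general {X : Type*} [NormedAddCommGroup X] :
    ∀ x y : X, |‖x‖ - ‖y‖| ≤ ‖x‖ + ‖y‖ - |‖x + y‖ - ‖x - y‖| := by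
  intro x y
  have hmin := abs_norm_add_sub_norm_sub_le_two_mul_min x y
  linarith [max_sub_min_eq_abs' ‖x‖ ‖y‖, min_add_max ‖x‖ ‖y‖]

theorem stmt_3 {X : Type*} [NormedAddCommGroup X] [NormedSpace ℝ X] :
    ∀ x y : X, |‖x‖ - ‖y‖| ≤ ‖x‖ + ‖y‖ - |‖x + y‖ - ‖x - y‖| :=
  stmt_3_general
end

section
/- Let K be a nonarchimedean normed field of characteristic different from 2, and let X be a normed vector space over K whose norm satisfies the ultrametric inequality. Then for all x, y in X, |‖x‖ - ‖y‖| ≤ (2/‖2‖) · max(‖x - y‖, ‖x + y‖) - (‖x‖ + ‖y‖), where ‖2‖ is the norm of 2 in K (nonzero since char K ≠ 2). -/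
lemma norm_two_mul_norm_le_max_norm_sub_add {K X : Type*} [NormedField K]
    [NormedAddCommGroup X] [NormedSpace K X] (hX : ∀ x y : X, ‖x + y‖ ≤ max ‖x‖ ‖y‖)
    (x y : X) : ‖(2 : K)‖ * ‖x‖ ≤ max ‖x - y‖ ‖x + y‖ := by
  have h : (2 : K) • x = (x + y) + (x - y) := by
    rw [two_smul]; abel
  calc ‖(2 : K)‖ * ‖x‖ = ‖(x + y) + (x - y)‖ := by rw [← norm_smul, h]
    _ ≤ max ‖x + y‖ ‖x - y‖ := hX _ _
    _ = max ‖x - y‖ ‖x + y‖ := max_comm _ _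

/-- `|a - b| + a + b = 2 max a b`. -/
lemma abs_sub_le_two_mul_sub_add {a b m : ℝ} (ha : a ≤ m) (hb : b ≤ m) :
    |a - b| ≤ 2 * m - (a + b) := by
  rw [abs_sub_le_iff]
  constructor <;> linarith

theorem stmt_6_general {K : Type*} [NormedField K]
    (hchar : ringChar K ≠ 2)
    {X : Type*} [NormedAddCommGroup X] [NormedSpace K X]
    (hX : ∀ x y : X, ‖x + y‖ ≤ max ‖x‖ ‖y‖) :
    ∀ x y : X, |‖x‖ - ‖y‖| ≤ (2 / ‖(2 : K)‖) * max ‖x - y‖ ‖x + y‖ - (‖x‖ + ‖y‖) := by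
  intro x y
  have h2 : 0 < ‖(2 : K)‖ := norm_pos_iff.mpr (Ring.two_ne_zero hchar)
  set M := max ‖x - y‖ ‖x + y‖
  have hx : ‖x‖ ≤ M / ‖(2 : K)‖ :=
    (le_div_iff₀' h2).mpr (norm_two_mul_norm_le_max_norm_sub_add hX x y)
  have hy : ‖y‖ ≤ M / ‖(2 : K)‖ := by
    have h := norm_two_mul_norm_le_max_norm_sub_add (K := K) hX y x
    rw [norm_sub_rev, add_comm] at h
    exact (le_div_iff₀' h2).mpr h
  rw [div_mul_eq_mul_div, mul_div_assoc]
  exact abs_sub_le_two_mul_sub_add hx hy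

theorem stmt_6 {K : Type*} [NormedField K]
    (hna : IsNonarchimedean (fun x : K => ‖x‖)) (hchar : ringChar K ≠ 2)
    {X : Type*} [NormedAddCommGroup X] [NormedSpace K X]
    (hX : ∀ x y : X, ‖x + y‖ ≤ max ‖x‖ ‖y‖) :
    ∀ x y : X, |‖x‖ - ‖y‖| ≤ (2 / ‖(2 : K)‖) * max ‖x - y‖ ‖x + y‖ - (‖x‖ + ‖y‖) :=
  stmt_6_general hchar hX
end

section
/- Let K be a nonarchimedean normed field of characteristic different from 2, and let X be a normed vector space over K with an ultrametric norm. Then for all x, y in X, |‖x‖ - ‖y‖| ≤ ‖x‖ + ‖y‖ - (2/‖2‖) · |‖x + y‖ - ‖x - y‖|. -/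
/-!
All triangles are isosceles in an ultrametric space: if `‖x - y‖ < ‖x + y‖`, then
`x + x = (x + y) + (x - y)` and `y + y = (x + y) - (x - y)` both have norm `‖x + y‖`, so
`|‖x + y‖ - ‖x - y‖| ≤ min ‖x + x‖ ‖y + y‖ = ‖2‖ * min ‖x‖ ‖y‖`. The theorem follows from
`|a - b| = a + b - 2 * min a b`.
-/

namespace IsUltrametricDist

variable {E : Type*} [SeminormedAddCommGroup E] [IsUltrametricDist E]

lemma norm_add_sub_norm_sub_le_min (x y : E) :
    ‖x + y‖ - ‖x - y‖ ≤ min ‖x + x‖ ‖y + y‖ := by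
  rcases le_or_gt ‖x + y‖ ‖x - y‖ with hle | hlt
  · exact (sub_nonpos.2 hle).trans (le_min (norm_nonneg _) (norm_nonneg _))
  have hxx : ‖x + x‖ = ‖x + y‖ := by
    have h := norm_add_eq_max_of_norm_ne_norm hlt.ne'
    rwa [max_eq_left hlt.le, show x + y + (x - y) = x + x by abel] at h
  have hyy : ‖y + y‖ = ‖x + y‖ := by
    have h := norm_add_eq_max_of_norm_ne_norm (x := x + y) (y := -(x - y))
      (by rw [norm_neg]; exact hlt.ne')
    rwa [norm_neg, max_eq_left hlt.le, show x + y + -(x - y) = y + y by abel] at h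
  rw [hxx, hyy, min_self]
  exact sub_le_self _ (norm_nonneg _)

lemma abs_norm_add_sub_norm_sub_le_min (x y : E) :
    |‖x + y‖ - ‖x - y‖| ≤ min ‖x + x‖ ‖y + y‖ := by
  refine abs_sub_le_iff.2 ⟨norm_add_sub_norm_sub_le_min x y, ?_⟩
  have h := norm_add_sub_norm_sub_le_min x (-y)
  rwa [← sub_eq_add_neg, sub_neg_eq_add, ← neg_add, norm_neg] at h

lemma abs_norm_add_sub_norm_sub_le_norm_two_mul_min (K : Type*) [NormedField K]
    [NormedSpace K E] (x y : E) :
    |‖x + y‖ - ‖x - y‖| ≤ ‖(2 : K)‖ * min ‖x‖ ‖y‖ := by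
  simpa only [← two_smul K, norm_smul, mul_min_of_nonneg _ _ (norm_nonneg _)] using
    abs_norm_add_sub_norm_sub_le_min x y

end IsUltrametricDist

theorem stmt_9_general {K : Type*} [NormedField K]
    {X : Type*} [NormedAddCommGroup X] [NormedSpace K X]
    (hX : ∀ x y : X, ‖x + y‖ ≤ max ‖x‖ ‖y‖) :
    ∀ x y : X, |‖x‖ - ‖y‖| ≤ ‖x‖ + ‖y‖ - (2 / ‖(2 : K)‖) * |‖x + y‖ - ‖x - y‖| := by
  have : IsUltrametricDist X := .isUltrametricDist_of_forall_norm_add_le_max_norm hX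
  intro x y
  have hscaled : (2 / ‖(2 : K)‖) * |‖x + y‖ - ‖x - y‖| ≤ 2 * min ‖x‖ ‖y‖ :=
    calc (2 / ‖(2 : K)‖) * |‖x + y‖ - ‖x - y‖|
        ≤ (2 / ‖(2 : K)‖) * (‖(2 : K)‖ * min ‖x‖ ‖y‖) := by
          gcongr
          exact IsUltrametricDist.abs_norm_add_sub_norm_sub_le_norm_two_mul_min K x y
      _ = (2 / ‖(2 : K)‖ * ‖(2 : K)‖) * min ‖x‖ ‖y‖ := (mul_assoc _ _ _).symm
      _ ≤ 2 * min ‖x‖ ‖y‖ := by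
          gcongr
          -- also when `‖2‖ = 0`, since then `2 / ‖2‖ = 0`
          rcases eq_or_ne ‖(2 : K)‖ 0 with h | h <;> simp [h]
  rw [← max_sub_min_eq_abs']
  linarith [min_add_max ‖x‖ ‖y‖]

theorem stmt_9 {K : Type*} [NormedField K]
    (hna : IsNonarchimedean (fun x : K => ‖x‖)) (hchar : ringChar K ≠ 2)
    {X : Type*} [NormedAddCommGroup X] [NormedSpace K X]
    (hX : ∀ x y : X, ‖x + y‖ ≤ max ‖x‖ ‖y‖) :
    ∀ x y : X, |‖x‖ - ‖y‖| ≤ ‖x‖ + ‖y‖ - (2 / ‖(2 : K)‖) * |‖x + y‖ - ‖x - y‖| :=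
  stmt_9_general hX
end

section
/- Let K be a nonarchimedean normed field with ‖2‖ = 1 (e.g., residue characteristic different from 2), and let X be a normed vector space over K with an ultrametric norm. Then for all x, y in X, |‖x‖ - ‖y‖| ≤ 2 · max(‖x - y‖, ‖x + y‖) - (‖x‖ + ‖y‖) and this is at most 2 · max(‖x‖, ‖y‖) - (‖x‖ + ‖y‖). -/
/-! Since `‖2‖ = 1`, `‖x‖ = ‖(x - y) + (x + y)‖` and `‖y‖ = ‖(x + y) - (x - y)‖`, so the ultrametric
inequality gives `max ‖x‖ ‖y‖ ≤ max ‖x - y‖ ‖x + y‖`; it also gives the reverse inequality. Both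
bounds of the theorem are therefore equalities, because `2 * max a b - (a + b) = |a - b|`. -/

lemma abs_sub_eq_two_mul_max_sub_add {α : Type*} [CommRing α] [LinearOrder α] [IsOrderedRing α]
    (a b : α) : |a - b| = 2 * max a b - (a + b) := by
  rw [← max_sub_min_eq_abs', ← min_add_max a b]
  ring

namespace IsUltrametricDist

variable {X : Type*} [SeminormedAddCommGroup X] [IsUltrametricDist X]

lemma norm_sub_le_max (x y : X) : ‖x - y‖ ≤ max ‖x‖ ‖y‖ := by
  simpa only [sub_eq_add_neg, norm_neg] using norm_add_le_max x (-y)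

lemma max_norm_sub_norm_add_le (x y : X) : max ‖x - y‖ ‖x + y‖ ≤ max ‖x‖ ‖y‖ :=
  max_le (norm_sub_le_max x y) (norm_add_le_max x y)

variable {K : Type*} [NormedField K] [NormedSpace K X]

lemma norm_le_max_norm_sub_norm_add (h2 : ‖(2 : K)‖ = 1) (x y : X) :
    ‖x‖ ≤ max ‖x - y‖ ‖x + y‖ :=
  calc ‖x‖ = ‖(2 : K) • x‖ := by rw [norm_smul, h2, one_mul]
    _ = ‖(x - y) + (x + y)‖ := by rw [two_smul, sub_add_add_cancel]
    _ ≤ max ‖x - y‖ ‖x + y‖ := norm_add_le_max _ _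

lemma max_norm_sub_norm_add_eq (h2 : ‖(2 : K)‖ = 1) (x y : X) :
    max ‖x - y‖ ‖x + y‖ = max ‖x‖ ‖y‖ := by
  refine (max_norm_sub_norm_add_le x y).antisymm (max_le ?_ ?_)
  · exact norm_le_max_norm_sub_norm_add h2 x y
  · simpa only [norm_sub_rev y x, add_comm y x] using norm_le_max_norm_sub_norm_add h2 y x

end IsUltrametricDist

theorem stmt_10_general {K : Type*} [NormedField K]
    (h2 : ‖(2 : K)‖ = 1)
    {X : Type*} [NormedAddCommGroup X] [NormedSpace K X]
    (hX : ∀ x y : X, ‖x + y‖ ≤ max ‖x‖ ‖y‖) :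
    ∀ x y : X, |‖x‖ - ‖y‖| ≤ 2 * max ‖x - y‖ ‖x + y‖ - (‖x‖ + ‖y‖) ∧
      2 * max ‖x - y‖ ‖x + y‖ - (‖x‖ + ‖y‖) ≤ 2 * max ‖x‖ ‖y‖ - (‖x‖ + ‖y‖) := by
  have : IsUltrametricDist X := .isUltrametricDist_of_forall_norm_add_le_max_norm hX
  intro x y
  rw [IsUltrametricDist.max_norm_sub_norm_add_eq h2, ← abs_sub_eq_two_mul_max_sub_add]
  exact ⟨le_rfl, le_rfl⟩

theorem stmt_10 {K : Type*} [NormedField K]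
    (hna : IsNonarchimedean (fun x : K => ‖x‖)) (h2 : ‖(2 : K)‖ = 1)
    {X : Type*} [NormedAddCommGroup X] [NormedSpace K X]
    (hX : ∀ x y : X, ‖x + y‖ ≤ max ‖x‖ ‖y‖) :
    ∀ x y : X, |‖x‖ - ‖y‖| ≤ 2 * max ‖x - y‖ ‖x + y‖ - (‖x‖ + ‖y‖) ∧
      2 * max ‖x - y‖ ‖x + y‖ - (‖x‖ + ‖y‖) ≤ 2 * max ‖x‖ ‖y‖ - (‖x‖ + ‖y‖) :=
  stmt_10_general h2 hX
end

section
/- Let K be a nonarchimedean normed field with ‖2‖ = 1, and let X be a normed vector space over K with an ultrametric norm. Then for all x, y in X, |‖x‖ - ‖y‖| ≤ ‖x‖ + ‖y‖ - 2 · |‖x + y‖ - ‖x - y‖|. -/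
/-!
All triangles are isosceles in an ultrametric space. If `‖x‖ ≠ ‖y‖`, then `‖x + y‖` and `‖x - y‖`
both equal `max ‖x‖ ‖y‖`, so the correction term vanishes and the inequality is the triangle
inequality. If `‖x‖ = ‖y‖`, then `‖x + y‖` and `‖x - y‖` both lie in `[0, ‖x‖]`, so their
difference is at most `‖x‖ = (‖x‖ + ‖y‖) / 2`.
-/

namespace IsUltrametricDist

variable {X : Type*} [SeminormedAddCommGroup X] [IsUltrametricDist X] {x y : X}

lemma norm_add_eq_norm_sub_of_norm_ne_norm (h : ‖x‖ ≠ ‖y‖) : ‖x + y‖ = ‖x - y‖ := by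
  rw [sub_eq_add_neg, norm_add_eq_max_of_norm_ne_norm h,
    norm_add_eq_max_of_norm_ne_norm (by rwa [norm_neg]), norm_neg]

lemma abs_norm_add_sub_norm_sub_le_of_norm_eq_norm (h : ‖x‖ = ‖y‖) :
    |‖x + y‖ - ‖x - y‖| ≤ ‖x‖ := by
  have hadd : ‖x + y‖ ≤ ‖x‖ := (norm_add_le_max x y).trans (by rw [h, max_self])
  have hsub : ‖x - y‖ ≤ ‖x‖ := by
    simpa [sub_eq_add_neg, h] using norm_add_le_max x (-y)
  exact abs_sub_le_of_nonneg_of_le (norm_nonneg _) hadd (norm_nonneg _) hsub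

end IsUltrametricDist

theorem stmt_11_general
    {X : Type*} [NormedAddCommGroup X]
    (hX : ∀ x y : X, ‖x + y‖ ≤ max ‖x‖ ‖y‖) :
    ∀ x y : X, |‖x‖ - ‖y‖| ≤ ‖x‖ + ‖y‖ - 2 * |‖x + y‖ - ‖x - y‖| := by
  have : IsUltrametricDist X :=
    IsUltrametricDist.isUltrametricDist_of_forall_norm_add_le_max_norm hX
  intro x y
  by_cases h : ‖x‖ = ‖y‖
  · have := IsUltrametricDist.abs_norm_add_sub_norm_sub_le_of_norm_eq_norm h
    rw [h, sub_self, abs_zero]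
    linarith
  · rw [IsUltrametricDist.norm_add_eq_norm_sub_of_norm_ne_norm h, sub_self, abs_zero, mul_zero,
      sub_zero]
    exact (abs_norm_sub_norm_le x y).trans (norm_sub_le x y)

theorem stmt_11 {K : Type*} [NormedField K]
    (hna : IsNonarchimedean (fun x : K => ‖x‖)) (h2 : ‖(2 : K)‖ = 1)
    {X : Type*} [NormedAddCommGroup X] [NormedSpace K X]
    (hX : ∀ x y : X, ‖x + y‖ ≤ max ‖x‖ ‖y‖) :
    ∀ x y : X, |‖x‖ - ‖y‖| ≤ ‖x‖ + ‖y‖ - 2 * |‖x + y‖ - ‖x - y‖| :=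
  stmt_11_general hX
end

section
/- Let X be a normed vector space over the 2-adic numbers ℚ₂ whose norm satisfies the ultrametric inequality. Then for all x, y in X, |‖x‖ - ‖y‖| ≤ ‖x‖ + ‖y‖ - 4 · |‖x + y‖ - ‖x - y‖|. -/
/-! With `a = x + y` and `b = x - y` we have `2x = a + b` and `2y = a - b`. If `‖a‖ ≠ ‖b‖`, all
triangles being isosceles gives `‖2‖ ‖x‖ = ‖2‖ ‖y‖ = max ‖a‖ ‖b‖ ≥ |‖a‖ - ‖b‖|`, so the left side
vanishes and the right side is nonnegative. If `‖a‖ = ‖b‖`, the inequality is the triangle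
inequality for `|·|`. Over `ℚ₂` the factor `2 ‖2‖⁻¹` in front of `|‖a‖ - ‖b‖|` is `4`. -/

namespace IsUltrametricDist

section Group

variable {X : Type*} [SeminormedAddCommGroup X] [IsUltrametricDist X]

lemma norm_add_self_eq_max_of_norm_add_ne_norm_sub {x y : X} (h : ‖x + y‖ ≠ ‖x - y‖) :
    ‖x + x‖ = max ‖x + y‖ ‖x - y‖ := by
  rw [← norm_add_eq_max_of_norm_ne_norm h]
  abel_nf

lemma norm_add_self_eq_norm_add_self_of_norm_add_ne_norm_sub {x y : X}
    (h : ‖x + y‖ ≠ ‖x - y‖) : ‖x + x‖ = ‖y + y‖ := by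
  have hyx : ‖y + x‖ ≠ ‖y - x‖ := by rwa [add_comm, norm_sub_rev y x]
  rw [norm_add_self_eq_max_of_norm_add_ne_norm_sub h,
    norm_add_self_eq_max_of_norm_add_ne_norm_sub hyx, add_comm y x, norm_sub_rev y x]

lemma abs_norm_add_sub_norm_sub_le_norm_add_self (x y : X) :
    |‖x + y‖ - ‖x - y‖| ≤ ‖x + x‖ := by
  by_cases h : ‖x + y‖ = ‖x - y‖
  · simp [h]
  rw [norm_add_self_eq_max_of_norm_add_ne_norm_sub h, abs_sub_le_iff]
  constructor <;> linarith [le_max_left ‖x + y‖ ‖x - y‖, le_max_right ‖x + y‖ ‖x - y‖,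
    norm_nonneg (x + y), norm_nonneg (x - y)]

end Group

variable {𝕜 X : Type*} [NormedField 𝕜] [SeminormedAddCommGroup X] [NormedSpace 𝕜 X]
  [IsUltrametricDist X]

lemma abs_norm_sub_norm_le_add_sub_two_mul_inv_norm_two_mul (x y : X) :
    |‖x‖ - ‖y‖| ≤ ‖x‖ + ‖y‖ - 2 * ‖(2 : 𝕜)‖⁻¹ * |‖x + y‖ - ‖x - y‖| := by
  by_cases h : ‖x + y‖ = ‖x - y‖
  · rw [h, sub_self, abs_zero, mul_zero, sub_zero, abs_sub_le_iff]
    constructor <;> linarith [norm_nonneg x, norm_nonneg y]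
  have norm_add_self (z : X) : ‖z + z‖ = ‖(2 : 𝕜)‖ * ‖z‖ := by rw [← norm_smul, two_smul]
  have hxy : ‖(2 : 𝕜)‖ * ‖x‖ = ‖(2 : 𝕜)‖ * ‖y‖ := by
    rw [← norm_add_self, ← norm_add_self,
      norm_add_self_eq_norm_add_self_of_norm_add_ne_norm_sub h]
  have hd : |‖x + y‖ - ‖x - y‖| ≤ ‖(2 : 𝕜)‖ * ‖x‖ :=
    norm_add_self x ▸ abs_norm_add_sub_norm_sub_le_norm_add_self x y
  have hd_pos : 0 < |‖x + y‖ - ‖x - y‖| := abs_pos.2 (sub_ne_zero.2 h)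
  have h2 : 0 < ‖(2 : 𝕜)‖ :=
    (norm_nonneg _).lt_of_ne fun h0 ↦ by rw [← h0, zero_mul] at hd; linarith
  have hd' : ‖(2 : 𝕜)‖⁻¹ * |‖x + y‖ - ‖x - y‖| ≤ ‖y‖ := by
    rw [inv_mul_le_iff₀ h2, ← hxy]
    exact hd
  rw [mul_left_cancel₀ h2.ne' hxy, sub_self, abs_zero]
  linarith

end IsUltrametricDist

theorem stmt_13 {X : Type*} [NormedAddCommGroup X] [NormedSpace ℚ_[2] X]
    (hX : ∀ x y : X, ‖x + y‖ ≤ max ‖x‖ ‖y‖) :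
    ∀ x y : X, |‖x‖ - ‖y‖| ≤ ‖x‖ + ‖y‖ - 4 * |‖x + y‖ - ‖x - y‖| := by
  have : IsUltrametricDist X := .isUltrametricDist_of_forall_norm_add_le_max_norm hX
  have h_norm_two : ‖(2 : ℚ_[2])‖ = 2⁻¹ := by exact_mod_cast Padic.norm_p (p := 2)
  intro x y
  convert IsUltrametricDist.abs_norm_sub_norm_le_add_sub_two_mul_inv_norm_two_mul (𝕜 := ℚ_[2]) x y
    using 3
  rw [h_norm_two]
  norm_num
end

section
/- Let p be an odd prime and X a normed vector space over ℚₚ with ultrametric norm. Then for all x, y in X, |‖x‖ - ‖y‖| ≤ ‖x‖ + ‖y‖ - 2 · |‖x + y‖ - ‖x - y‖|. -/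
/-!
If `‖x + y‖ ≠ ‖x - y‖`, the isosceles property of ultrametric norms applied to
`(x + y) ± (x - y) = 2x, 2y` gives `‖x‖ = ‖y‖ = max ‖x + y‖ ‖x - y‖` as soon as doubling preserves
norms (in `ℚₚ`, `|2|ₚ = 1` for odd `p`). The left side then vanishes and the
right side is `2 min ‖x + y‖ ‖x - y‖ ≥ 0`. If `‖x + y‖ = ‖x - y‖` it reduces to
`|a - b| ≤ a + b` for `a, b ≥ 0`.
-/

lemma Padic.norm_two_eq_one {p : ℕ} [Fact p.Prime] (hp : Odd p) : ‖(2 : ℚ_[p])‖ = 1 := by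
  exact_mod_cast (Padic.norm_natCast_eq_one_iff (n := 2)).mpr (Nat.coprime_two_right.mpr hp)

namespace IsUltrametricDist

variable {E : Type*} [SeminormedAddCommGroup E] [IsUltrametricDist E]

lemma norm_eq_max_norm_add_norm_sub (h2 : ∀ z : E, ‖z + z‖ = ‖z‖) {x y : E}
    (h : ‖x + y‖ ≠ ‖x - y‖) : ‖x‖ = max ‖x + y‖ ‖x - y‖ := by
  rw [← h2 x, ← norm_add_eq_max_of_norm_ne_norm h]
  abel_nf

lemma abs_norm_sub_norm_le_add_sub_two_mul_abs_norm_add_sub_norm_sub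
    (h2 : ∀ z : E, ‖z + z‖ = ‖z‖) (x y : E) :
    |‖x‖ - ‖y‖| ≤ ‖x‖ + ‖y‖ - 2 * |‖x + y‖ - ‖x - y‖| := by
  by_cases h : ‖x + y‖ = ‖x - y‖
  · rw [h, sub_self, abs_zero, mul_zero, sub_zero, abs_sub_le_iff]
    constructor <;> linarith [norm_nonneg x, norm_nonneg y]
  · have hx := norm_eq_max_norm_add_norm_sub h2 h
    have hy : ‖y‖ = max ‖x + y‖ ‖x - y‖ := by
      rw [← norm_neg (x - y), neg_sub] at h ⊢
      rw [add_comm] at h ⊢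
      exact norm_eq_max_norm_add_norm_sub h2 h
    rw [hx, hy, sub_self, abs_zero, ← max_sub_min_eq_abs']
    linarith [le_min (norm_nonneg (x + y)) (norm_nonneg (x - y))]

end IsUltrametricDist

theorem stmt_15 (p : ℕ) [Fact p.Prime] (hp : Odd p)
    {X : Type*} [NormedAddCommGroup X] [NormedSpace ℚ_[p] X]
    (hX : ∀ x y : X, ‖x + y‖ ≤ max ‖x‖ ‖y‖) :
    ∀ x y : X, |‖x‖ - ‖y‖| ≤ ‖x‖ + ‖y‖ - 2 * |‖x + y‖ - ‖x - y‖| := by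
  have : IsUltrametricDist X := .isUltrametricDist_of_forall_norm_add_le_max_norm hX
  refine IsUltrametricDist.abs_norm_sub_norm_le_add_sub_two_mul_abs_norm_add_sub_norm_sub
    fun z => ?_
  rw [← two_smul ℚ_[p] z, norm_smul, Padic.norm_two_eq_one hp, one_mul]
end
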